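/- arXiv:2511.20212 — 2 statements merged into one kernel-verified Lean document; each statement's English description precedes it below -/
import Mathlib

section
/- Apply the layered spin-configuration setup to the graph H = G'. Take mixer angles β_ℓ = ψ for 1 ≤ ℓ ≤ p−2 and β_{p−1} = β_p = π/4, where ψ is an arbitrary real number. For an edge {a,b} of G' and an integer k define the Laurent coefficient w_{(a,b)}(k) = Σ_{z : D(z)=k} z_a^[0] · z_b^[0] · Π_{x∈V(G')} f(z_x), the sum ranging over all layered spin configurations z on V(G') with exponent k. Then for every edge {a,b} of G' with {a,b} ≠ {x_0,y_0} and every integer k ≥ (p−1)·MAXCUT(G') + 200n0² + 2n0(11n0+1), one has w_{(a,b)}(k) = 0. -/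
/-!
STATEMENT 4: vanishing of high-degree Laurent coefficients for observables on
edges other than {x₀, y₀}. For every edge {a,b} of G′ with {a,b} ≠ {x₀,y₀} and
every k ≥ (p-1)·MAXCUT(G′) + 200 n₀² + 2 n₀(11 n₀ + 1), the coefficient
w_{(a,b)}(k) = Σ_{D(z)=k} z_a^{[0]} z_b^{[0]} ∏_x f(z_x) is zero. Mixer angles:
β_ℓ = ψ (1 ≤ ℓ ≤ p-2), β_{p-1} = β_p = π/4, with ψ arbitrary.
-/
noncomputable section

namespace QAOA

/-- Vertex type of the graph `G'` built from a graph on vertex type `V` of size `n0`: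
gadget vertices `L u i` (`i < n0+1`), `R u i` (`i < 10 n0`), frame vertices
`X i`, `Y i` (`i < 100 n0²`), and the controller `W`. -/
inductive GPV (V : Type) (n0 : ℕ) : Type where
  | L : V → Fin (n0 + 1) → GPV V n0
  | R : V → Fin (10 * n0) → GPV V n0
  | X : Fin (100 * n0 * n0) → GPV V n0
  | Y : Fin (100 * n0 * n0) → GPV V n0
  | W : GPV V n0
  deriving DecidableEq, Fintype

/-- Base relation (one orientation per edge) describing the edges of `G'`. -/
def gpRel {V : Type} [DecidableEq V] (n0 : ℕ) (G : SimpleGraph V) [DecidableRel G.Adj] :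
    GPV V n0 → GPV V n0 → Bool
  | .L u _, .R v _ => u == v
  | .L u i, .L v j => decide (G.Adj u v) && ((i : ℕ) == (j : ℕ))
  | .X _, .Y _ => true
  | .X i, .L _ _ => (i : ℕ) == 0
  | .X i, .R _ _ => (i : ℕ) == 0
  | .Y i, .L _ _ => (i : ℕ) == 0
  | .Y i, .R _ _ => (i : ℕ) == 0
  | .W, .X i => (i : ℕ) == 0
  | .W, .Y i => (i : ℕ) == 0
  | .W, .L _ i => (i : ℕ) == 0
  | _, _ => false

/-- The graph `G'` obtained from `G` by the four-step construction. -/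
def Gp {V : Type} [DecidableEq V] (n0 : ℕ) (G : SimpleGraph V) [DecidableRel G.Adj] :
    SimpleGraph (GPV V n0) :=
  SimpleGraph.fromRel (fun a b => gpRel n0 G a b = true)

instance {V : Type} [DecidableEq V] (n0 : ℕ) (G : SimpleGraph V) [DecidableRel G.Adj] :
    DecidableRel (Gp n0 G).Adj := fun a b =>
  decidable_of_iff _ (SimpleGraph.fromRel_adj (fun a b => gpRel n0 G a b = true) a b).symm

/-- The special frame vertex `x₀`. -/
def xzero (V : Type) (n0 : ℕ) (h : 0 < n0) : GPV V n0 :=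
  GPV.X ⟨0, Nat.mul_pos (Nat.mul_pos (by norm_num) h) h⟩

/-- The special frame vertex `y₀`. -/
def yzero (V : Type) (n0 : ℕ) (h : 0 < n0) : GPV V n0 :=
  GPV.Y ⟨0, Nat.mul_pos (Nat.mul_pos (by norm_num) h) h⟩

/-- `cutSet H S` is the number of edges of `H` with exactly one endpoint in `S`. -/
def cutSet {W : Type} [Fintype W] [DecidableEq W] (H : SimpleGraph W) [DecidableRel H.Adj]
    (S : Finset W) : ℕ :=
  (Finset.univ.filter (fun pr : W × W => H.Adj pr.1 pr.2 ∧ pr.1 ∈ S ∧ pr.2 ∉ S)).card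

/-- `maxCut H` is the maximum of `cutSet H S` over all vertex subsets `S`. -/
def maxCut {W : Type} [Fintype W] [DecidableEq W] (H : SimpleGraph W) [DecidableRel H.Adj] : ℕ :=
  (Finset.univ : Finset (Finset W)).sup (fun S => cutSet H S)

end QAOA
namespace QAOA

/-- Map a layer index `j ∈ {-p,…,p}` to an index in `Fin (2p+1)` (via `j ↦ j + p`). -/
def lay (p : ℕ) (j : ℤ) : Fin (2 * p + 1) :=
  ⟨(j + p).toNat % (2 * p + 1), Nat.mod_lt _ (by omega)⟩

/-- One-qubit mixer matrix element `m(β; a, b)`: `cos β` if `a = b`, `i sin β` otherwise. -/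
noncomputable def mElem (β : ℝ) (a b : ℤˣ) : ℂ :=
  if a = b then (Real.cos β : ℂ) else Complex.I * (Real.sin β : ℂ)

/-- Conjugated mixer matrix element `m̄(β; a, b)`: `cos β` if `a = b`, `-i sin β` otherwise. -/
noncomputable def mElemBar (β : ℝ) (a b : ℤˣ) : ℂ :=
  if a = b then (Real.cos β : ℂ) else -(Complex.I * (Real.sin β : ℂ))

/-- The one-site kernel `f(z_x)` of a vertex, given its layered spins
`zx : Fin (2p+1) → ℤˣ` and the mixer angles `β`. -/
noncomputable def kernel (p : ℕ) (β : ℕ → ℝ) (zx : Fin (2 * p + 1) → ℤˣ) : ℂ :=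
  (1 / 2 : ℂ)
    * (∏ ℓ ∈ Finset.Icc 1 (p - 1), mElem (β ℓ) (zx (lay p ℓ)) (zx (lay p (ℓ + 1))))
    * mElem (β p) (zx (lay p p)) (zx (lay p 0))
    * mElemBar (β p) (zx (lay p 0)) (zx (lay p (-(p : ℤ))))
    * (∏ ℓ ∈ Finset.Icc 1 (p - 1),
        mElemBar (β ℓ) (zx (lay p (-(ℓ : ℤ) - 1))) (zx (lay p (-(ℓ : ℤ)))))

/-- `layerCut H p z j` is the number of edges of `H` whose endpoints get different
signs on layer `j` (each unordered edge counted once). -/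
def layerCut {W : Type} [Fintype W] [DecidableEq W] (H : SimpleGraph W) [DecidableRel H.Adj]
    (p : ℕ) (z : W → Fin (2 * p + 1) → ℤˣ) (j : ℤ) : ℕ :=
  (Finset.univ.filter (fun pr : W × W =>
      H.Adj pr.1 pr.2 ∧ z pr.1 (lay p j) ≠ z pr.2 (lay p j))).card / 2

/-- The exponent `D(z) = Σ_{j=1}^p (C_j(z) - C_{-j}(z))` of a layered configuration. -/
def expnt {W : Type} [Fintype W] [DecidableEq W] (H : SimpleGraph W) [DecidableRel H.Adj]
    (p : ℕ) (z : W → Fin (2 * p + 1) → ℤˣ) : ℤ :=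
  ∑ j ∈ Finset.Icc 1 p, ((layerCut H p z (j : ℤ) : ℤ) - (layerCut H p z (-(j : ℤ)) : ℤ))

/-- The monomial contribution `z_a^{[0]} z_b^{[0]} ∏_x f(z_x)` of a configuration. -/
noncomputable def coeffTerm {W : Type} [Fintype W] [DecidableEq W] (p : ℕ) (β : ℕ → ℝ)
    (a b : W) (z : W → Fin (2 * p + 1) → ℤˣ) : ℂ :=
  ((z a (lay p 0) : ℤ) : ℂ) * ((z b (lay p 0) : ℤ) : ℂ) * ∏ x, kernel p β (z x)

/-- The mixer angles used in the reduction: `β_ℓ = ψ` for `1 ≤ ℓ ≤ p-2` and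
`β_{p-1} = β_p = π/4`. -/
noncomputable def betaAngles (p : ℕ) (ψ : ℝ) : ℕ → ℝ := fun ℓ =>
  if ℓ = p - 1 ∨ ℓ = p then Real.pi / 4 else ψ

end QAOA

namespace QAOA

/-!
Fix the spins on every layer except layer `0`. For a vertex `x ∉ {a, b}`, summing its layer-`0`
spin `c` out of `m(β_p; s, c) · m̄(β_p; c, s')` gives `δ_{s s'}` (unitarity of the mixer), so the
coefficient only sees configurations whose layers `p` and `-p` agree outside `{a, b}`: when they
disagree at such an `x`, flipping the layer-`0` spin of `x` negates the term and leaves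
`D` unchanged, so these terms cancel in pairs. For the remaining configurations
`C_p - C_{-p} ≤ deg a + deg b` while `C_j - C_{-j} ≤ MAXCUT` for `j < p`, so their exponent is at
most `(p - 1) · MAXCUT + deg a + deg b`. In `G'` every vertex other than `x₀, y₀` has degree at
most `100 n₀²` and `x₀, y₀` have degree `111 n₀² + n₀ + 1`, which gives the threshold.
-/

open Finset

lemma lay_ne_lay_zero {p : ℕ} {j : ℤ} (hlo : -(p : ℤ) ≤ j) (hhi : j ≤ p) (hj : j ≠ 0) :
    lay p j ≠ lay p 0 := by
  intro h
  have h' := congrArg Fin.val h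
  simp only [lay, zero_add, Int.toNat_natCast] at h'
  rw [Nat.mod_eq_of_lt (by omega), Nat.mod_eq_of_lt (by omega)] at h'
  omega

lemma mElem_mul_mElemBar_neg (β : ℝ) {s s' : ℤˣ} (h : s ≠ s') (c : ℤˣ) :
    mElem β s (-c) * mElemBar β (-c) s' = -(mElem β s c * mElemBar β c s') := by
  rcases Int.units_eq_one_or s with rfl | rfl <;> rcases Int.units_eq_one_or s' with rfl | rfl <;>
    rcases Int.units_eq_one_or c with rfl | rfl <;>
    first | exact absurd rfl h | (simp [mElem, mElemBar]; ring)

lemma kernel_update_lay_zero_neg {p : ℕ} (hp : 1 ≤ p) (β : ℕ → ℝ) (zx : Fin (2 * p + 1) → ℤˣ)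
    (h : zx (lay p p) ≠ zx (lay p (-(p : ℤ)))) :
    kernel p β (Function.update zx (lay p 0) (-zx (lay p 0))) = -kernel p β zx := by
  set zx' := Function.update zx (lay p 0) (-zx (lay p 0))
  have hfix : ∀ j : ℤ, -(p : ℤ) ≤ j → j ≤ p → j ≠ 0 → zx' (lay p j) = zx (lay p j) :=
    fun j h1 h2 h3 => Function.update_of_ne (lay_ne_lay_zero h1 h2 h3) _ _
  have hpos : ∏ ℓ ∈ Icc 1 (p - 1), mElem (β ℓ) (zx' (lay p ℓ)) (zx' (lay p (ℓ + 1)))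
      = ∏ ℓ ∈ Icc 1 (p - 1), mElem (β ℓ) (zx (lay p ℓ)) (zx (lay p (ℓ + 1))) :=
    prod_congr rfl fun ℓ hℓ => by
      rw [mem_Icc] at hℓ
      rw [hfix ℓ (by omega) (by omega) (by omega), hfix (ℓ + 1) (by omega) (by omega) (by omega)]
  have hneg : ∏ ℓ ∈ Icc 1 (p - 1), mElemBar (β ℓ) (zx' (lay p (-ℓ - 1))) (zx' (lay p (-ℓ)))
      = ∏ ℓ ∈ Icc 1 (p - 1), mElemBar (β ℓ) (zx (lay p (-ℓ - 1))) (zx (lay p (-ℓ))) :=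
    prod_congr rfl fun ℓ hℓ => by
      rw [mem_Icc] at hℓ
      rw [hfix (-ℓ - 1) (by omega) (by omega) (by omega),
        hfix (-ℓ) (by omega) (by omega) (by omega)]
  unfold kernel
  rw [hpos, hneg, hfix p (by omega) le_rfl (by omega), hfix (-p) le_rfl (by omega) (by omega),
    show zx' (lay p 0) = _ from Function.update_self ..]
  linear_combination (1 / 2 : ℂ)
    * (∏ ℓ ∈ Icc 1 (p - 1), mElem (β ℓ) (zx (lay p ℓ)) (zx (lay p (ℓ + 1))))
    * (∏ ℓ ∈ Icc 1 (p - 1), mElemBar (β ℓ) (zx (lay p (-ℓ - 1))) (zx (lay p (-ℓ))))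
    * mElem_mul_mElemBar_neg (β p) h (zx (lay p 0))

section FlipZero

variable {W : Type} [DecidableEq W] {p : ℕ}

def flipZero (p : ℕ) (z : W → Fin (2 * p + 1) → ℤˣ) (x : W) : W → Fin (2 * p + 1) → ℤˣ :=
  Function.update z x (Function.update (z x) (lay p 0) (-z x (lay p 0)))

lemma flipZero_apply_of_ne (z : W → Fin (2 * p + 1) → ℤˣ) (x y : W) {i : Fin (2 * p + 1)}
    (hi : i ≠ lay p 0) : flipZero p z x y i = z y i := by
  rcases eq_or_ne y x with rfl | hy
  · simp [flipZero, hi]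
  · simp [flipZero, hy]

lemma flipZero_flipZero (z : W → Fin (2 * p + 1) → ℤˣ) (x : W) :
    flipZero p (flipZero p z x) x = z := by
  simp [flipZero]

lemma flipZero_ne (z : W → Fin (2 * p + 1) → ℤˣ) (x : W) : flipZero p z x ≠ z := fun h =>
  units_ne_neg_self (z x (lay p 0))
    (by simpa [flipZero] using (congrFun (congrFun h x) (lay p 0)).symm)

variable [Fintype W]

lemma coeffTerm_flipZero (hp : 1 ≤ p) (β : ℕ → ℝ) (z : W → Fin (2 * p + 1) → ℤˣ) {a b x : W}
    (hxa : x ≠ a) (hxb : x ≠ b) (hz : z x (lay p p) ≠ z x (lay p (-(p : ℤ)))) :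
    coeffTerm p β a b (flipZero p z x) = -coeffTerm p β a b z := by
  unfold coeffTerm flipZero
  rw [Function.update_of_ne hxa.symm, Function.update_of_ne hxb.symm,
    Fintype.prod_eq_mul_prod_compl x, Fintype.prod_eq_mul_prod_compl x (fun y => kernel p β (z y)),
    Function.update_self, kernel_update_lay_zero_neg hp β _ hz,
    prod_congr rfl fun y hy => by rw [Function.update_of_ne (by simpa using hy)]]
  ring

lemma expnt_flipZero {H : SimpleGraph W} [DecidableRel H.Adj] (z : W → Fin (2 * p + 1) → ℤˣ)
    (x : W) : expnt H p (flipZero p z x) = expnt H p z := by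
  refine sum_congr rfl fun j hj => ?_
  rw [mem_Icc] at hj
  simp only [layerCut,
    flipZero_apply_of_ne z x _ (lay_ne_lay_zero (j := j) (by omega) (by omega) (by omega)),
    flipZero_apply_of_ne z x _ (lay_ne_lay_zero (j := -j) (by omega) (by omega) (by omega))]

def mismatches (p : ℕ) (a b : W) (z : W → Fin (2 * p + 1) → ℤˣ) : Finset W :=
  univ.filter fun x => x ≠ a ∧ x ≠ b ∧ z x (lay p p) ≠ z x (lay p (-(p : ℤ)))

lemma mismatches_flipZero (hp : 1 ≤ p) (a b : W) (z : W → Fin (2 * p + 1) → ℤˣ) (x : W) :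
    mismatches p a b (flipZero p z x) = mismatches p a b z := by
  simp only [mismatches,
    flipZero_apply_of_ne z x _ (lay_ne_lay_zero (j := p) (by omega) le_rfl (by omega)),
    flipZero_apply_of_ne z x _ (lay_ne_lay_zero (j := -p) le_rfl (by omega) (by omega))]

end FlipZero

section Cuts

variable {W : Type} [Fintype W] [DecidableEq W] (H : SimpleGraph W) [DecidableRel H.Adj]

def cutPairs (s : W → ℤˣ) : Finset (W × W) :=
  univ.filter fun pr => H.Adj pr.1 pr.2 ∧ s pr.1 ≠ s pr.2

def incidentPairs (c : W) : Finset (W × W) :=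
  {c} ×ˢ H.neighborFinset c ∪ H.neighborFinset c ×ˢ {c}

lemma layerCut_eq (p : ℕ) (z : W → Fin (2 * p + 1) → ℤˣ) (j : ℤ) :
    layerCut H p z j = #(cutPairs H fun x => z x (lay p j)) / 2 := rfl

lemma card_cutPairs_le_two_mul_maxCut (s : W → ℤˣ) : #(cutPairs H s) ≤ 2 * maxCut H := by
  set S := univ.filter fun x => s x = 1
  have hsub : cutPairs H s ⊆ univ.filter (fun pr : W × W => H.Adj pr.1 pr.2 ∧ pr.1 ∈ S ∧ pr.2 ∉ S)
      ∪ univ.filter (fun pr : W × W => H.Adj pr.1 pr.2 ∧ pr.1 ∈ Sᶜ ∧ pr.2 ∉ Sᶜ) := by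
    intro pr hpr
    simp only [cutPairs, mem_filter, mem_univ, true_and] at hpr
    simp only [S, mem_union, mem_filter, mem_compl, mem_univ, true_and, not_not]
    rcases Int.units_eq_one_or (s pr.1) with h1 | h1 <;>
      rcases Int.units_eq_one_or (s pr.2) with h2 | h2 <;> simp_all
  have hS : cutSet H S ≤ maxCut H := le_sup (f := fun S => cutSet H S) (mem_univ S)
  have hSc : cutSet H Sᶜ ≤ maxCut H := le_sup (f := fun S => cutSet H S) (mem_univ Sᶜ)
  have := (card_le_card hsub).trans (card_union_le _ _)
  unfold cutSet at hS hSc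
  omega

lemma card_incidentPairs_le (c : W) : #(incidentPairs H c) ≤ 2 * H.degree c := by
  have := card_union_le ({c} ×ˢ H.neighborFinset c) (H.neighborFinset c ×ˢ {c})
  simp only [card_product, card_singleton, H.card_neighborFinset_eq_degree] at this
  rw [incidentPairs]
  omega

lemma cutPairs_subset_union_incidentPairs {a b : W} {u v : W → ℤˣ}
    (h : ∀ x, x ≠ a → x ≠ b → u x = v x) :
    cutPairs H u ⊆ cutPairs H v ∪ incidentPairs H a ∪ incidentPairs H b := by
  intro pr hpr
  simp only [cutPairs, mem_filter, mem_univ, true_and] at hpr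
  simp only [incidentPairs, cutPairs, mem_union, mem_filter, mem_product, mem_singleton,
    SimpleGraph.mem_neighborFinset, mem_univ, true_and]
  by_cases h1 : pr.1 = a ∨ pr.1 = b
  · rcases h1 with h1 | h1 <;> simp_all
  by_cases h2 : pr.2 = a ∨ pr.2 = b
  · rcases h2 with h2 | h2 <;> simp_all [H.adj_comm]
  push Not at h1 h2
  exact Or.inl (Or.inl ⟨hpr.1, by rw [← h _ h1.1 h1.2, ← h _ h2.1 h2.2]; exact hpr.2⟩)

variable {H}

lemma layerCut_le_maxCut (p : ℕ) (z : W → Fin (2 * p + 1) → ℤˣ) (j : ℤ) :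
    layerCut H p z j ≤ maxCut H := by
  have := card_cutPairs_le_two_mul_maxCut H fun x => z x (lay p j)
  rw [layerCut_eq]
  omega

lemma layerCut_le_add_degree {p : ℕ} {z : W → Fin (2 * p + 1) → ℤˣ} {a b : W} {j j' : ℤ}
    (h : ∀ x, x ≠ a → x ≠ b → z x (lay p j) = z x (lay p j')) :
    layerCut H p z j ≤ layerCut H p z j' + (H.degree a + H.degree b) := by
  have hsub := card_le_card (cutPairs_subset_union_incidentPairs H h)
  have := card_union_le (cutPairs H (fun x => z x (lay p j')) ∪ incidentPairs H a)
    (incidentPairs H b)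
  have := card_union_le (cutPairs H (fun x => z x (lay p j'))) (incidentPairs H a)
  have := card_incidentPairs_le H a
  have := card_incidentPairs_le H b
  rw [layerCut_eq, layerCut_eq]
  omega

lemma expnt_le_of_agree {p : ℕ} (hp : 1 ≤ p) {z : W → Fin (2 * p + 1) → ℤˣ} {a b : W}
    (h : ∀ x, x ≠ a → x ≠ b → z x (lay p p) = z x (lay p (-(p : ℤ)))) :
    expnt H p z ≤ ((p : ℤ) - 1) * maxCut H + (H.degree a + H.degree b) := by
  obtain ⟨q, rfl⟩ : ∃ q, p = q + 1 := ⟨p - 1, by omega⟩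
  have hlow : ∑ j ∈ Icc 1 q, ((layerCut H (q + 1) z j : ℤ) - layerCut H (q + 1) z (-(j : ℤ)))
      ≤ ∑ j ∈ Icc 1 q, (maxCut H : ℤ) :=
    sum_le_sum fun j _ => by have := layerCut_le_maxCut (H := H) (q + 1) z j; omega
  have htop := layerCut_le_add_degree (H := H) h
  rw [expnt, sum_Icc_succ_top (by omega)]
  simp only [sum_const, Nat.card_Icc, add_tsub_cancel_right, nsmul_eq_mul] at hlow
  push_cast at htop ⊢
  linarith

end Cuts

theorem sum_coeffTerm_eq_zero_of_lt {W : Type} [Fintype W] [DecidableEq W] (H : SimpleGraph W)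
    [DecidableRel H.Adj] {p : ℕ} (hp : 1 ≤ p) (β : ℕ → ℝ) (a b : W) {k : ℤ}
    (hk : ((p : ℤ) - 1) * maxCut H + (H.degree a + H.degree b) < k) :
    ∑ z ∈ univ.filter (fun z : W → Fin (2 * p + 1) → ℤˣ => expnt H p z = k),
      coeffTerm p β a b z = 0 := by
  have hne : ∀ z ∈ univ.filter (fun z : W → Fin (2 * p + 1) → ℤˣ => expnt H p z = k),
      (mismatches p a b z).Nonempty := fun z hz => by
    rw [mem_filter] at hz
    by_contra hem
    rw [not_nonempty_iff_eq_empty, mismatches, filter_eq_empty_iff] at hem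
    have := expnt_le_of_agree (H := H) (z := z) hp fun x hxa hxb => by
      by_contra hx
      exact hem (mem_univ x) ⟨hxa, hxb, hx⟩
    omega
  -- `pick z` depends on `z` only through `mismatches p a b z`, which the flip preserves.
  let pick (z : W → Fin (2 * p + 1) → ℤˣ) : W :=
    if h : (mismatches p a b z).Nonempty then h.choose else a
  have hpick : ∀ z, (mismatches p a b z).Nonempty → pick z ∈ mismatches p a b z := fun z h => by
    simp only [pick, dif_pos h]
    exact h.choose_spec
  have hpick_flipZero : ∀ z x, pick (flipZero p z x) = pick z := fun z x => by
    simp only [pick, mismatches_flipZero hp]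
  refine sum_involution (fun z _ => flipZero p z (pick z)) (fun z hz => ?_)
    (fun z _ _ => flipZero_ne z _) (fun z hz => ?_)
    (fun z _ => by simp only [hpick_flipZero, flipZero_flipZero])
  · have hmem := hpick z (hne z hz)
    simp only [mismatches, mem_filter, mem_univ, true_and] at hmem
    rw [coeffTerm_flipZero hp β z hmem.1 hmem.2.1 hmem.2.2, add_neg_cancel]
  · simpa only [mem_filter, expnt_flipZero, mem_univ, true_and] using hz

lemma card_union_le_of_le {α : Type} [DecidableEq α] {s t : Finset α} {m n : ℕ} (hs : #s ≤ m)
    (ht : #t ≤ n) : #(s ∪ t) ≤ m + n :=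
  (card_union_le s t).trans (add_le_add hs ht)

lemma degree_le_card_of_forall_adj_mem {W : Type} [Fintype W] (H : SimpleGraph W)
    [DecidableRel H.Adj] {t : W} {s : Finset W} (h : ∀ y, H.Adj t y → y ∈ s) :
    H.degree t ≤ #s := by
  rw [← H.card_neighborFinset_eq_degree]
  exact card_le_card fun y hy => h y ((H.mem_neighborFinset _ _).1 hy)

section DegreeBounds

variable {V : Type} [Fintype V] [DecidableEq V] {n0 : ℕ} (G : SimpleGraph V) [DecidableRel G.Adj]

lemma degree_L_le (hn0 : 0 < n0) (hV : Fintype.card V = n0) (u : V) (i : Fin (n0 + 1)) :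
    (Gp n0 G).degree (.L u i) ≤ 11 * n0 + 3 := calc
  _ ≤ #(univ.image (GPV.R u) ∪ univ.image (fun v => GPV.L v i)
      ∪ {xzero V n0 hn0, yzero V n0 hn0, .W}) :=
    degree_le_card_of_forall_adj_mem _ fun y hy => by
      cases y <;> simp [Gp, gpRel, xzero, yzero] at hy ⊢ <;> grind [Fin.ext_iff]
  _ ≤ 11 * n0 + 3 := (card_union_le_of_le (card_union_le_of_le card_image_le card_image_le)
      card_le_three).trans (by simp [hV]; omega)

lemma degree_R_le (hn0 : 0 < n0) (u : V) (i : Fin (10 * n0)) :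
    (Gp n0 G).degree (.R u i) ≤ n0 + 3 := calc
  _ ≤ #(univ.image (GPV.L u) ∪ {xzero V n0 hn0, yzero V n0 hn0}) :=
    degree_le_card_of_forall_adj_mem _ fun y hy => by
      cases y <;> simp [Gp, gpRel, xzero, yzero] at hy ⊢ <;> grind [Fin.ext_iff]
  _ ≤ n0 + 3 := (card_union_le_of_le card_image_le card_le_two).trans (by simp)

lemma degree_W_le (hn0 : 0 < n0) (hV : Fintype.card V = n0) :
    (Gp n0 G).degree .W ≤ n0 + 2 := calc
  _ ≤ #(univ.image (fun v => GPV.L v 0) ∪ {xzero V n0 hn0, yzero V n0 hn0}) :=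
    degree_le_card_of_forall_adj_mem _ fun y hy => by
      cases y <;> simp [Gp, gpRel, xzero, yzero] at hy ⊢ <;> grind [Fin.ext_iff]
  _ ≤ n0 + 2 := (card_union_le_of_le card_image_le card_le_two).trans (by simp [hV])

lemma degree_X_le_of_ne_zero (i : Fin (100 * n0 * n0)) (hi : (i : ℕ) ≠ 0) :
    (Gp n0 G).degree (.X i) ≤ 100 * n0 ^ 2 := calc
  _ ≤ #(univ.image (GPV.Y (V := V))) :=
    degree_le_card_of_forall_adj_mem _ fun y hy => by
      cases y <;> simp [Gp, gpRel] at hy ⊢ <;> grind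
  _ ≤ 100 * n0 ^ 2 := card_image_le.trans (by simp; ring_nf; omega)

lemma degree_Y_le_of_ne_zero (i : Fin (100 * n0 * n0)) (hi : (i : ℕ) ≠ 0) :
    (Gp n0 G).degree (.Y i) ≤ 100 * n0 ^ 2 := calc
  _ ≤ #(univ.image (GPV.X (V := V))) :=
    degree_le_card_of_forall_adj_mem _ fun y hy => by
      cases y <;> simp [Gp, gpRel] at hy ⊢ <;> grind
  _ ≤ 100 * n0 ^ 2 := card_image_le.trans (by simp; ring_nf; omega)

lemma degree_X_le (hV : Fintype.card V = n0) (i : Fin (100 * n0 * n0)) :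
    (Gp n0 G).degree (.X i) ≤ 111 * n0 ^ 2 + n0 + 1 := calc
  _ ≤ #(univ.image (GPV.Y (V := V)) ∪ univ.image (fun q : V × Fin (n0 + 1) => GPV.L q.1 q.2)
      ∪ univ.image (fun q : V × Fin (10 * n0) => GPV.R q.1 q.2) ∪ {.W}) :=
    degree_le_card_of_forall_adj_mem _ fun y hy => by
      cases y <;> simp [Gp, gpRel] at hy ⊢
  _ ≤ 111 * n0 ^ 2 + n0 + 1 := (card_union_le_of_le (card_union_le_of_le (card_union_le_of_le
      card_image_le card_image_le) card_image_le) (card_singleton _).le).trans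
      (by simp [hV]; ring_nf; omega)

lemma degree_Y_le (hV : Fintype.card V = n0) (i : Fin (100 * n0 * n0)) :
    (Gp n0 G).degree (.Y i) ≤ 111 * n0 ^ 2 + n0 + 1 := calc
  _ ≤ #(univ.image (GPV.X (V := V)) ∪ univ.image (fun q : V × Fin (n0 + 1) => GPV.L q.1 q.2)
      ∪ univ.image (fun q : V × Fin (10 * n0) => GPV.R q.1 q.2) ∪ {.W}) :=
    degree_le_card_of_forall_adj_mem _ fun y hy => by
      cases y <;> simp [Gp, gpRel] at hy ⊢
  _ ≤ 111 * n0 ^ 2 + n0 + 1 := (card_union_le_of_le (card_union_le_of_le (card_union_le_of_le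
      card_image_le card_image_le) card_image_le) (card_singleton _).le).trans
      (by simp [hV]; ring_nf; omega)

lemma degree_le_of_ne_xzero_of_ne_yzero (hn0 : 0 < n0) (hV : Fintype.card V = n0) {t : GPV V n0}
    (hx : t ≠ xzero V n0 hn0) (hy : t ≠ yzero V n0 hn0) :
    (Gp n0 G).degree t ≤ 100 * n0 ^ 2 := by
  have hsq : n0 ≤ n0 ^ 2 := Nat.le_self_pow two_ne_zero n0
  cases t with
  | L u i => linarith [degree_L_le G hn0 hV u i]
  | R u i => linarith [degree_R_le G hn0 u i]
  | W => linarith [degree_W_le G hn0 hV]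
  | X i => exact degree_X_le_of_ne_zero G i fun h => hx (congrArg GPV.X (Fin.ext h))
  | Y i => exact degree_Y_le_of_ne_zero G i fun h => hy (congrArg GPV.Y (Fin.ext h))

lemma degree_le (hn0 : 0 < n0) (hV : Fintype.card V = n0) (t : GPV V n0) :
    (Gp n0 G).degree t ≤ 111 * n0 ^ 2 + n0 + 1 := by
  by_cases hx : t = xzero V n0 hn0
  · exact hx ▸ degree_X_le G hV _
  by_cases hy : t = yzero V n0 hn0
  · exact hy ▸ degree_Y_le G hV _
  exact (degree_le_of_ne_xzero_of_ne_yzero G hn0 hV hx hy).trans (by omega)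

end DegreeBounds

theorem other_edges_high_coefficients_vanish
    (n0 : ℕ) (hn0 : 0 < n0) {V : Type} [Fintype V] [DecidableEq V]
    (hV : Fintype.card V = n0) (G : SimpleGraph V) [DecidableRel G.Adj]
    (p : ℕ) (hp : 2 ≤ p) (ψ : ℝ)
    (a b : GPV V n0) (hab : (Gp n0 G).Adj a b)
    (hne : ¬((a = xzero V n0 hn0 ∧ b = yzero V n0 hn0) ∨
             (a = yzero V n0 hn0 ∧ b = xzero V n0 hn0)))
    (k : ℤ)
    (hk : ((p : ℤ) - 1) * (maxCut (Gp n0 G) : ℤ) + 200 * (n0 : ℤ) ^ 2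
        + 2 * (n0 : ℤ) * (11 * (n0 : ℤ) + 1) ≤ k) :
    ∑ z ∈ Finset.univ.filter (fun z : GPV V n0 → Fin (2 * p + 1) → ℤˣ =>
        expnt (Gp n0 G) p z = k),
      coeffTerm p (betaAngles p ψ) a b z = 0 := by
  have hsq : 1 ≤ n0 ^ 2 := Nat.one_le_pow _ _ hn0
  have hdeg : (Gp n0 G).degree a + (Gp n0 G).degree b < 222 * n0 ^ 2 + 2 * n0 := by
    by_cases ha : a = xzero V n0 hn0 ∨ a = yzero V n0 hn0
    · have hb : b ≠ xzero V n0 hn0 ∧ b ≠ yzero V n0 hn0 := by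
        rcases ha with rfl | rfl <;> constructor <;> rintro rfl <;>
          first | exact hab.ne rfl | simp at hne
      linarith [degree_le G hn0 hV a, degree_le_of_ne_xzero_of_ne_yzero G hn0 hV hb.1 hb.2]
    · push Not at ha
      linarith [degree_le_of_ne_xzero_of_ne_yzero G hn0 hV ha.1 ha.2, degree_le G hn0 hV b]
  refine sum_coeffTerm_eq_zero_of_lt _ (by omega) _ a b ?_
  have : ((Gp n0 G).degree a : ℤ) + (Gp n0 G).degree b < 222 * (n0 : ℤ) ^ 2 + 2 * n0 := by
    exact_mod_cast hdeg
  linarith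

end QAOA
end
end

section
/- Let b(n0) = (10000·n0⁴ + n0·(11n0+1) + 1) + 10·n0²·(n0+1). Then there exists an integer r with 0 ≤ r ≤ n0 such that MAXCUT(G') = b(n0) + (n0+1)·MAXCUT(G) + r. -/
/-!
STATEMENT 9: with b(n₀) = (10000 n₀⁴ + n₀(11 n₀ + 1) + 1) + 10 n₀²(n₀ + 1),
MAXCUT(G′) = b(n₀) + (n₀+1)·MAXCUT(G) + r for some 0 ≤ r ≤ n₀.
-/
noncomputable section

/-!
Count the edges of `G'` cut by `S` block by block. The frame `X × Y` is a complete bipartite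
graph with `m = 100 n₀²` vertices per side. If `x₀` and `y₀` lie on the same side of `S`, at
least `m` frame edges are uncut, which outweighs anything the edges from `x₀`, `y₀` to the
gadgets and to `w` can gain (at most `n₀(11 n₀ + 1) + 1 < m`). If they are separated, every
gadget vertex and `w` is cut from exactly one of them. Beyond that, the gadget bicliques
contribute at most `10 n₀²(n₀ + 1)`, the `n₀ + 1` synchronous copies of `G` at most
`(n₀ + 1) MAXCUT(G)`, and the edges `w u_{1,0}` between `0` and `n₀`. Conversely, lifting a
maximum cut `T` of `G` (all `u_{1,i}` with `u ∈ T`, all `u_{2,j}` with `u ∉ T`, and `X`)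
attains every bound except the last.
-/

namespace QAOA

open Finset

section Crossing

variable {W : Type*} [DecidableEq W] (S : Finset W)

def crossing (a b : W) : ℕ := if (a ∈ S ↔ b ∈ S) then 0 else 1

variable {S}

lemma crossing_comm (a b : W) : crossing S a b = crossing S b a := by
  simp only [crossing, Iff.comm]

lemma crossing_le_one (a b : W) : crossing S a b ≤ 1 := by
  unfold crossing
  split <;> omega

lemma crossing_eq_one {a b : W} (hab : a ∈ S ↔ b ∉ S) : crossing S a b = 1 := by
  unfold crossing
  rw [if_neg]
  tauto

lemma crossing_add_crossing_of_separated (a : W) {x y : W} (hxy : x ∈ S ↔ y ∉ S) :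
    crossing S a x + crossing S a y = 1 := by
  by_cases hx : x ∈ S <;> by_cases hy : y ∈ S <;> by_cases ha : a ∈ S <;>
    simp_all [crossing]

lemma ite_add_ite_eq_crossing (a b : W) :
    ((if a ∈ S ∧ b ∉ S then 1 else 0) + if b ∈ S ∧ a ∉ S then 1 else 0) = crossing S a b := by
  by_cases ha : a ∈ S <;> by_cases hb : b ∈ S <;> simp [crossing, ha, hb]

lemma crossing_add_ite_add_ite (a b : W) :
    crossing S a b + ((if a ∈ S ∧ b ∈ S then 1 else 0) + if a ∉ S ∧ b ∉ S then 1 else 0) =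
      1 := by
  by_cases ha : a ∈ S <;> by_cases hb : b ∈ S <;> simp [crossing, ha, hb]

end Crossing

section Counting

variable {α β : Type*} [Fintype α] [Fintype β]

lemma sum_sum_le_card_mul_card {F : α → β → ℕ} (hF : ∀ a b, F a b ≤ 1) :
    ∑ a, ∑ b, F a b ≤ Fintype.card α * Fintype.card β := by
  calc ∑ a, ∑ b, F a b ≤ ∑ _a : α, Fintype.card β :=
        sum_le_sum fun a _ => by simpa using sum_le_card_nsmul univ (F a) 1 fun b _ => hF a b
    _ = Fintype.card α * Fintype.card β := by simp

lemma sum_sum_ite_and (P : α → Prop) (Q : β → Prop) [DecidablePred P] [DecidablePred Q] :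
    ∑ a, ∑ b, (if P a ∧ Q b then 1 else 0) = #{a | P a} * #{b | Q b} := by
  simp_rw [ite_and, sum_ite_irrel, sum_const_zero, sum_boole, sum_ite, sum_const_zero,
    add_zero, sum_const, smul_eq_mul, Nat.cast_id]

lemma le_mul_add_mul {m p p' q q' : ℕ} (hp : p + p' = m) (hq : q + q' = m) (hp1 : 1 ≤ p)
    (hq1 : 1 ≤ q) : m ≤ p * q + p' * q' := by
  rcases Nat.eq_zero_or_pos q' with rfl | hq' <;> nlinarith

variable {W : Type*} [DecidableEq W] (S : Finset W)

lemma sum_sum_crossing_add (f : α → W) (g : β → W) :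
    ∑ a, ∑ b, crossing S (f a) (g b) +
        (#{a | f a ∈ S} * #{b | g b ∈ S} + #{a | f a ∉ S} * #{b | g b ∉ S}) =
      Fintype.card α * Fintype.card β := by
  rw [← sum_sum_ite_and, ← sum_sum_ite_and, ← sum_add_distrib, ← sum_add_distrib]
  simp_rw [← sum_add_distrib, crossing_add_ite_add_ite]
  simp

lemma sum_sum_crossing_add_card_le (f g : α → W) {a₀ b₀ : α} (h : f a₀ ∈ S ↔ g b₀ ∈ S) :
    ∑ a, ∑ b, crossing S (f a) (g b) + Fintype.card α ≤ Fintype.card α * Fintype.card α := by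
  have hcard := sum_sum_crossing_add S f g
  have hf := card_filter_add_card_filter_not (s := univ) fun a => f a ∈ S
  have hg := card_filter_add_card_filter_not (s := univ) fun b => g b ∈ S
  rw [card_univ] at hf hg
  by_cases h₀ : f a₀ ∈ S
  · have hp : 1 ≤ #{a | f a ∈ S} := card_pos.2 ⟨a₀, by simpa using h₀⟩
    have hq : 1 ≤ #{b | g b ∈ S} := card_pos.2 ⟨b₀, by simpa using h.1 h₀⟩
    have := le_mul_add_mul hf hg hp hq
    omega
  · have hp : 1 ≤ #{a | f a ∉ S} := card_pos.2 ⟨a₀, by simpa using h₀⟩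
    have hq : 1 ≤ #{b | g b ∉ S} := card_pos.2 ⟨b₀, by simpa using mt h.2 h₀⟩
    have := le_mul_add_mul ((add_comm _ _).trans hf) ((add_comm _ _).trans hg) hp hq
    omega

lemma sum_crossing_add_crossing_le (f : α → W) (x y : W) :
    ∑ a, (crossing S (f a) x + crossing S (f a) y) ≤ 2 * Fintype.card α := by
  simpa [mul_comm] using sum_le_card_nsmul univ _ 2 fun a _ =>
    add_le_add (crossing_le_one (f a) x) (crossing_le_one (f a) y)

lemma sum_crossing_add_crossing_of_separated (f : α → W) {x y : W} (hxy : x ∈ S ↔ y ∉ S) :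
    ∑ a, (crossing S (f a) x + crossing S (f a) y) = Fintype.card α := by
  simp [crossing_add_crossing_of_separated _ hxy]

end Counting

section Graph

variable {W : Type} [Fintype W] [DecidableEq W] (H : SimpleGraph W) [DecidableRel H.Adj]

lemma two_mul_cutSet (S : Finset W) :
    2 * cutSet H S = ∑ a, ∑ b, if H.Adj a b then crossing S a b else 0 := by
  have hcut : cutSet H S = ∑ a, ∑ b, if H.Adj a b ∧ a ∈ S ∧ b ∉ S then 1 else 0 := by
    rw [cutSet, card_filter, ← Fintype.sum_prod_type']
  have hswap : cutSet H S = ∑ a, ∑ b, if H.Adj a b ∧ b ∈ S ∧ a ∉ S then 1 else 0 := by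
    rw [hcut, sum_comm]
    simp only [H.adj_comm]
  rw [two_mul]
  nth_rewrite 2 [hswap]
  rw [hcut, ← sum_add_distrib]
  refine sum_congr rfl fun a _ => ?_
  rw [← sum_add_distrib]
  refine sum_congr rfl fun b _ => ?_
  by_cases hab : H.Adj a b
  · simp only [hab, true_and, if_true, ite_add_ite_eq_crossing]
  · simp [hab]

lemma cutSet_le_maxCut (T : Finset W) : cutSet H T ≤ maxCut H :=
  le_sup (mem_univ T)

end Graph

section CrossingsBetween

variable {W : Type*} [DecidableEq W] (H : SimpleGraph W) [DecidableRel H.Adj] (S : Finset W)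
  {α β : Type*} [Fintype α] [Fintype β]

def crossingsBetween (f : α → W) (g : β → W) : ℕ :=
  ∑ a, ∑ b, if H.Adj (f a) (g b) then crossing S (f a) (g b) else 0

variable {H S}

lemma crossingsBetween_comm (f : α → W) (g : β → W) :
    crossingsBetween H S f g = crossingsBetween H S g f := by
  rw [crossingsBetween, sum_comm]
  simp only [crossingsBetween, H.adj_comm, crossing_comm]

lemma crossingsBetween_eq_zero {f : α → W} {g : β → W} (h : ∀ a b, ¬ H.Adj (f a) (g b)) :
    crossingsBetween H S f g = 0 := by
  simp [crossingsBetween, h]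

lemma crossingsBetween_of_forall_adj {f : α → W} {g : β → W} (h : ∀ a b, H.Adj (f a) (g b)) :
    crossingsBetween H S f g = ∑ a, ∑ b, crossing S (f a) (g b) := by
  simp [crossingsBetween, h]

lemma crossingsBetween_of_adj_iff [DecidableEq β] {f : α → W} {g : β → W} (b₀ : β)
    (h : ∀ a b, H.Adj (f a) (g b) ↔ b = b₀) :
    crossingsBetween H S f g = ∑ a, crossing S (f a) (g b₀) := by
  simp [crossingsBetween, h]

end CrossingsBetween

section Construction

open Function

variable {V : Type} {n0 : ℕ}

def GPV.equivSum :
    (V × Fin (n0 + 1)) ⊕ (V × Fin (10 * n0)) ⊕ Fin (100 * n0 * n0) ⊕ Fin (100 * n0 * n0) ⊕ Unit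
      ≃ GPV V n0 where
  toFun
    | .inl p => .L p.1 p.2
    | .inr (.inl p) => .R p.1 p.2
    | .inr (.inr (.inl k)) => .X k
    | .inr (.inr (.inr (.inl k))) => .Y k
    | .inr (.inr (.inr (.inr _))) => .W
  invFun
    | .L u i => .inl (u, i)
    | .R u j => .inr (.inl (u, j))
    | .X k => .inr (.inr (.inl k))
    | .Y k => .inr (.inr (.inr (.inl k)))
    | .W => .inr (.inr (.inr (.inr ())))
  left_inv x := by rcases x with _ | _ | _ | _ | _ <;> rfl
  right_inv x := by cases x <;> rfl

lemma GPV.sum_univ_eq [Fintype V] {M : Type*} [AddCommMonoid M] (f : GPV V n0 → M) :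
    ∑ x, f x = ∑ p, f (uncurry .L p) + (∑ p, f (uncurry .R p) + (∑ k, f (.X k) +
      (∑ k, f (.Y k) + ∑ _u : Unit, f .W))) := by
  rw [← GPV.equivSum.sum_comp]
  simp only [Fintype.sum_sum_type]
  rfl

variable [DecidableEq V] (G : SimpleGraph V) [DecidableRel G.Adj]

lemma Gp_adj_L_L {u v : V} {i j : Fin (n0 + 1)} :
    (Gp n0 G).Adj (.L u i) (.L v j) ↔ G.Adj u v ∧ i = j := by
  simp only [Gp, SimpleGraph.fromRel_adj, gpRel, Bool.and_eq_true, decide_eq_true_eq,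
    beq_iff_eq, Fin.val_inj, ne_eq, GPV.L.injEq, not_and]
  constructor
  · rintro ⟨-, ⟨h, rfl⟩ | ⟨h, rfl⟩⟩
    exacts [⟨h, rfl⟩, ⟨h.symm, rfl⟩]
  · rintro ⟨h, rfl⟩
    exact ⟨fun huv => (G.ne_of_adj h huv).elim, Or.inl ⟨h, rfl⟩⟩

variable (S : Finset (GPV V n0)) (hn0 : 0 < n0)

local notation "x₀" => xzero V n0 hn0
local notation "y₀" => yzero V n0 hn0

lemma crossingsBetween_X_Y :
    crossingsBetween (Gp n0 G) S .X .Y = ∑ k, ∑ k', crossing S (.X k) (.Y k') :=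
  crossingsBetween_of_forall_adj fun _ _ => by simp [Gp, gpRel]

lemma crossingsBetween_W_X :
    crossingsBetween (Gp n0 G) S (fun _ : Unit => .W) .X = crossing S .W x₀ := by
  rw [crossingsBetween_of_adj_iff ⟨0, by positivity⟩ fun _ _ => by simp [Gp, gpRel, Fin.ext_iff]]
  simp [xzero]

lemma crossingsBetween_W_Y :
    crossingsBetween (Gp n0 G) S (fun _ : Unit => .W) .Y = crossing S .W y₀ := by
  rw [crossingsBetween_of_adj_iff ⟨0, by positivity⟩ fun _ _ => by simp [Gp, gpRel, Fin.ext_iff]]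
  simp [yzero]

variable [Fintype V]

def layer (i : Fin (n0 + 1)) : Finset V := {u | GPV.L u i ∈ S}

lemma crossingsBetween_L_L :
    crossingsBetween (Gp n0 G) S (uncurry .L) (uncurry .L) =
      2 * ∑ i, cutSet G (layer S i) := by
  simp only [crossingsBetween, Fintype.sum_prod_type, uncurry_apply_pair, Gp_adj_L_L, ite_and,
    sum_ite_irrel, sum_ite_eq, mem_univ, if_true, sum_const_zero]
  rw [sum_comm, mul_sum]
  refine sum_congr rfl fun i _ => ?_
  rw [two_mul_cutSet]
  simp [crossing, layer]

lemma crossingsBetween_L_R :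
    crossingsBetween (Gp n0 G) S (uncurry .L) (uncurry .R) =
      ∑ p, ∑ j, crossing S (uncurry .L p) (.R p.1 j) := by
  simp only [crossingsBetween, Fintype.sum_prod_type, uncurry_apply_pair]
  simp [Gp, gpRel]

lemma crossingsBetween_W_L :
    crossingsBetween (Gp n0 G) S (fun _ : Unit => .W) (uncurry .L) =
      ∑ u, crossing S .W (.L u 0) := by
  have hadj : ∀ u (i : Fin (n0 + 1)), (Gp n0 G).Adj .W (.L u i) ↔ i = 0 := by
    simp [Gp, gpRel]
  simp only [crossingsBetween, Fintype.sum_prod_type, uncurry_apply_pair, hadj]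
  simp

lemma crossingsBetween_L_X :
    crossingsBetween (Gp n0 G) S (uncurry .L) .X = ∑ p, crossing S (uncurry .L p) x₀ :=
  crossingsBetween_of_adj_iff _ fun ⟨_, _⟩ _ => by simp [Gp, gpRel, Fin.ext_iff]

lemma crossingsBetween_L_Y :
    crossingsBetween (Gp n0 G) S (uncurry .L) .Y = ∑ p, crossing S (uncurry .L p) y₀ :=
  crossingsBetween_of_adj_iff _ fun ⟨_, _⟩ _ => by simp [Gp, gpRel, Fin.ext_iff]

lemma crossingsBetween_R_X :
    crossingsBetween (Gp n0 G) S (uncurry .R) .X = ∑ p, crossing S (uncurry .R p) x₀ :=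
  crossingsBetween_of_adj_iff _ fun ⟨_, _⟩ _ => by simp [Gp, gpRel, Fin.ext_iff]

lemma crossingsBetween_R_Y :
    crossingsBetween (Gp n0 G) S (uncurry .R) .Y = ∑ p, crossing S (uncurry .R p) y₀ :=
  crossingsBetween_of_adj_iff _ fun ⟨_, _⟩ _ => by simp [Gp, gpRel, Fin.ext_iff]

lemma cutSet_Gp_eq :
    cutSet (Gp n0 G) S = ∑ i, cutSet G (layer S i)
      + ∑ p, ∑ j, crossing S (uncurry .L p) (.R p.1 j)
      + ∑ k, ∑ k', crossing S (.X k) (.Y k')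
      + (∑ p, (crossing S (uncurry .L p) x₀ + crossing S (uncurry .L p) y₀)
        + ∑ p, (crossing S (uncurry .R p) x₀ + crossing S (uncurry .R p) y₀))
      + (crossing S .W x₀ + crossing S .W y₀)
      + ∑ u, crossing S .W (.L u 0) := by
  have h := two_mul_cutSet (Gp n0 G) S
  -- split both endpoints over the five vertex classes and pair each block with its transpose
  rw [GPV.sum_univ_eq] at h
  simp only [GPV.sum_univ_eq, sum_add_distrib, ← crossingsBetween.eq_1] at h
  rw [crossingsBetween_comm (uncurry GPV.R) (uncurry GPV.L),
    crossingsBetween_comm GPV.X (uncurry GPV.L), crossingsBetween_comm GPV.Y (uncurry GPV.L),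
    crossingsBetween_comm GPV.X (uncurry GPV.R), crossingsBetween_comm GPV.Y (uncurry GPV.R),
    crossingsBetween_comm GPV.Y GPV.X,
    crossingsBetween_comm (uncurry GPV.L) (fun _ : Unit => GPV.W),
    crossingsBetween_comm (uncurry GPV.R) (fun _ : Unit => GPV.W),
    crossingsBetween_comm GPV.X (fun _ : Unit => GPV.W),
    crossingsBetween_comm GPV.Y (fun _ : Unit => GPV.W)] at h
  have hRR : crossingsBetween (Gp n0 G) S (uncurry .R) (uncurry .R) = 0 :=
    crossingsBetween_eq_zero fun ⟨_, _⟩ ⟨_, _⟩ => by simp [Gp, gpRel]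
  have hWR : crossingsBetween (Gp n0 G) S (fun _ : Unit => .W) (uncurry .R) = 0 :=
    crossingsBetween_eq_zero fun _ ⟨_, _⟩ => by simp [Gp, gpRel]
  have hXX : crossingsBetween (Gp n0 G) S .X .X = 0 :=
    crossingsBetween_eq_zero fun _ _ => by simp [Gp, gpRel]
  have hYY : crossingsBetween (Gp n0 G) S .Y .Y = 0 :=
    crossingsBetween_eq_zero fun _ _ => by simp [Gp, gpRel]
  have hWW : crossingsBetween (Gp n0 G) S (fun _ : Unit => .W) (fun _ : Unit => .W) = 0 :=
    crossingsBetween_eq_zero fun _ _ => by simp [Gp, gpRel]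
  rw [hRR, hWR, hXX, hYY, hWW, crossingsBetween_L_L, crossingsBetween_L_R,
    crossingsBetween_L_X G S hn0, crossingsBetween_L_Y G S hn0, crossingsBetween_R_X G S hn0,
    crossingsBetween_R_Y G S hn0, crossingsBetween_X_Y, crossingsBetween_W_L,
    crossingsBetween_W_X G S hn0, crossingsBetween_W_Y G S hn0] at h
  rw [sum_add_distrib, sum_add_distrib]
  omega

variable {G S}

lemma frame_add_spokes_le (hV : Fintype.card V = n0) :
    ∑ k, ∑ k', crossing S (.X k) (.Y k')
      + (∑ p, (crossing S (uncurry .L p) x₀ + crossing S (uncurry .L p) y₀)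
        + ∑ p, (crossing S (uncurry .R p) x₀ + crossing S (uncurry .R p) y₀))
      + (crossing S .W x₀ + crossing S .W y₀)
      ≤ 10000 * n0 ^ 4 + n0 * (11 * n0 + 1) + 1 := by
  have hframe := sum_sum_le_card_mul_card fun k k' =>
    crossing_le_one (S := S) (GPV.X k) (GPV.Y k')
  simp only [Fintype.card_fin] at hframe
  by_cases hxy : x₀ ∈ S ↔ y₀ ∉ S
  · rw [sum_crossing_add_crossing_of_separated S _ hxy,
      sum_crossing_add_crossing_of_separated S _ hxy, crossing_add_crossing_of_separated _ hxy]
    simp only [Fintype.card_prod, Fintype.card_fin, hV]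
    nlinarith
  · have hloss := sum_sum_crossing_add_card_le S GPV.X GPV.Y
      (a₀ := ⟨0, by positivity⟩) (b₀ := ⟨0, by positivity⟩)
      (by simp [xzero, yzero] at hxy ⊢; tauto)
    have hL := sum_crossing_add_crossing_le S (uncurry GPV.L) x₀ y₀
    have hR := sum_crossing_add_crossing_le S (uncurry GPV.R) x₀ y₀
    have hW := add_le_add (crossing_le_one (S := S) GPV.W x₀) (crossing_le_one (S := S) GPV.W y₀)
    simp only [Fintype.card_prod, Fintype.card_fin, hV] at hloss hL hR
    nlinarith

lemma cutSet_Gp_le (hn0 : 0 < n0) (hV : Fintype.card V = n0) :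
    cutSet (Gp n0 G) S ≤ ((10000 * n0 ^ 4 + n0 * (11 * n0 + 1) + 1) + 10 * n0 ^ 2 * (n0 + 1))
      + (n0 + 1) * maxCut G + n0 := by
  have hlayers : ∑ i, cutSet G (layer S i) ≤ (n0 + 1) * maxCut G := by
    simpa using sum_le_card_nsmul univ _ _ fun i _ => cutSet_le_maxCut G (layer S i)
  have hgadget :
      ∑ p, ∑ j, crossing S (uncurry .L p) (.R p.1 j) ≤ n0 * (n0 + 1) * (10 * n0) := by
    simpa [hV] using sum_sum_le_card_mul_card fun p j =>
      crossing_le_one (S := S) (uncurry GPV.L p) (GPV.R p.1 j)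
  have hcontrol : ∑ u, crossing S .W (.L u 0) ≤ n0 := by
    simpa [hV] using sum_le_card_nsmul univ _ 1 fun u _ =>
      crossing_le_one (S := S) GPV.W (GPV.L u 0)
  have hframe := frame_add_spokes_le (S := S) hn0 hV
  rw [cutSet_Gp_eq G S hn0]
  nlinarith

def liftSide (T : Finset V) : GPV V n0 → Bool
  | .L u _ => u ∈ T
  | .R u _ => u ∉ T
  | .X _ => true
  | _ => false

def liftCut (T : Finset V) : Finset (GPV V n0) := {x | liftSide T x}

lemma le_cutSet_Gp_liftCut (hn0 : 0 < n0) (hV : Fintype.card V = n0) (T : Finset V) :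
    ((10000 * n0 ^ 4 + n0 * (11 * n0 + 1) + 1) + 10 * n0 ^ 2 * (n0 + 1))
        + (n0 + 1) * cutSet G T ≤ cutSet (Gp n0 G) (liftCut T) := by
  set S : Finset (GPV V n0) := liftCut T
  have hsep : xzero V n0 hn0 ∈ S ↔ yzero V n0 hn0 ∉ S := by
    simp [S, liftCut, liftSide, xzero, yzero]
  have hlayers : ∑ i, cutSet G (layer S i) = (n0 + 1) * cutSet G T := by
    have : ∀ i, layer S i = T := fun i => by ext; simp [S, layer, liftCut, liftSide]
    simp [this]
  have hgadget :
      ∑ p, ∑ j, crossing S (uncurry .L p) (.R p.1 j) = n0 * (n0 + 1) * (10 * n0) := by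
    have : ∀ (p : V × Fin (n0 + 1)) j, crossing S (uncurry .L p) (.R p.1 j) = 1 :=
      fun ⟨_, _⟩ _ => crossing_eq_one (by simp [S, liftCut, liftSide])
    simp [this, hV]
  have hframe : ∑ k, ∑ k', crossing S (.X k) (.Y k') = 100 * n0 * n0 * (100 * n0 * n0) := by
    have : ∀ k k', crossing S (.X k) (.Y k') = 1 :=
      fun _ _ => crossing_eq_one (by simp [S, liftCut, liftSide])
    simp [this]
  rw [cutSet_Gp_eq G _ hn0, hlayers, hgadget, hframe,
    sum_crossing_add_crossing_of_separated _ _ hsep,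
    sum_crossing_add_crossing_of_separated _ _ hsep, crossing_add_crossing_of_separated _ hsep]
  simp only [Fintype.card_prod, Fintype.card_fin, hV]
  nlinarith [Nat.zero_le (∑ u, crossing S .W (.L u 0))]

end Construction

theorem maxcut_decomposition
    (n0 : ℕ) (hn0 : 0 < n0) {V : Type} [Fintype V] [DecidableEq V]
    (hV : Fintype.card V = n0) (G : SimpleGraph V) [DecidableRel G.Adj] :
    ∃ r : ℕ, r ≤ n0 ∧
      maxCut (Gp n0 G) =
        ((10000 * n0 ^ 4 + n0 * (11 * n0 + 1) + 1) + 10 * n0 ^ 2 * (n0 + 1))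
          + (n0 + 1) * maxCut G + r := by
  obtain ⟨T, -, hT⟩ : ∃ T ∈ univ, maxCut G = cutSet G T :=
    exists_mem_eq_sup univ univ_nonempty (cutSet G)
  have hlower := (le_cutSet_Gp_liftCut (G := G) hn0 hV T).trans (cutSet_le_maxCut _ _)
  have hupper : maxCut (Gp n0 G) ≤ _ := Finset.sup_le fun S _ => cutSet_Gp_le (S := S) hn0 hV
  rw [← hT] at hlower
  obtain ⟨r, hr⟩ := Nat.exists_eq_add_of_le hlower
  exact ⟨r, by omega, hr⟩

end QAOA
end
end
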